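/- arXiv:2102.09848 — 2 statements merged into one kernel-verified Lean document; each statement's English description precedes it below -/
import Mathlib

section
/- Let P be a d-partition of E, and suppose X ⊆ E is not contained in any block of P. If |X| >= d, then X has a subset X' of size d+1 that is not contained in any block of P. -/
open Set

variable {α : Type*}

/-- A `d`-partition of a set `E`: a collection of at least two subsets of `E`,
each of size at least `d`, such that every `d`-element subset of `E` is
contained in exactly one member of the collection. -/
def IsDPartition (d : ℕ) (E : Set α) (P : Set (Set α)) : Prop :=
  2 ≤ P.encard ∧ (∀ S ∈ P, S ⊆ E ∧ (d : ℕ∞) ≤ S.encard) ∧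
    ∀ Y ⊆ E, Y.encard = d → ∃! S, S ∈ P ∧ Y ⊆ S

/-- If `X ⊆ E` has at least `d` elements and is not contained in any block of
a `d`-partition `P` of `E`, then `X` has a subset of size `d+1` contained in
no block of `P`. -/
theorem exists_small_subset_not_in_block (d : ℕ) (E X : Set α)
    (P : Set (Set α)) (hP : IsDPartition d E P) (hXE : X ⊆ E)
    (hX : ∀ S ∈ P, ¬ X ⊆ S) (hcard : (d : ℕ∞) ≤ X.encard) :
    ∃ X' ⊆ X, X'.encard = d + 1 ∧ ∀ S ∈ P, ¬ X' ⊆ S := by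
  obtain ⟨Y, hYX, hYcard⟩ := Set.exists_subset_encard_eq hcard
  obtain ⟨-, -, huniq⟩ := hP
  obtain ⟨S, ⟨hSP, hYS⟩, hSuniq⟩ := huniq Y (hYX.trans hXE) hYcard
  obtain ⟨x, hxX, hxS⟩ := Set.not_subset.mp (hX S hSP)
  refine ⟨insert x Y, Set.insert_subset hxX hYX, ?_, ?_⟩
  · rw [Set.encard_insert_of_notMem (fun h => hxS (hYS h)), hYcard]
  · intro T hTP hsub
    have : T = S := hSuniq T ⟨hTP, (Set.subset_insert x Y).trans hsub⟩
    exact hxS (this ▸ hsub (Set.mem_insert x Y))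
end

section
/- Let E ⊆ Z^n be a d-sparse subset and M a paving matroid of rank d+1 on E, with hyperplane collection H(M). Then H(M) satisfies: Z^n is not in H(M); every H in H(M) has size >= d; and if H_1, H_2 in H(M) and u in Z^n satisfy |H_1 ∩ (u + H_2)| >= d, then u = 0 and H_1 = H_2. -/
open Set Matroid

variable {n : ℕ}

/-- A circuit of a matroid: a minimal dependent set. -/
def Matroid.IsCircuit' {α : Type*} (M : Matroid α) (C : Set α) : Prop :=
  M.Dep C ∧ ∀ D, M.Dep D → D ⊆ C → D = C

/-- The rank of a matroid, as an extended natural number. -/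
noncomputable def Matroid.eRank' {α : Type*} (M : Matroid α) : ℕ∞ :=
  ⨆ B ∈ {B | M.IsBase B}, B.encard

/-- A hyperplane of a finite-rank matroid: a maximal subset of the ground set
of rank `rank M - 1`. -/
def Matroid.IsHyperplane {α : Type*} (M : Matroid α) (H : Set α) : Prop :=
  H ⊆ M.E ∧ (M ↾ H).eRank' + 1 = M.eRank' ∧
    ∀ H', H ⊂ H' → H' ⊆ M.E → (M ↾ H').eRank' + 1 ≠ M.eRank'

/-- The translate `u + S` of a subset `S ⊆ ℤⁿ`. -/
def ztranslate (u : Fin n → ℤ) (S : Set (Fin n → ℤ)) : Set (Fin n → ℤ) :=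
  (fun x => u + x) '' S

/-- A subset `S ⊆ ℤⁿ` is `d`-sparse if `|S ∩ (u + S)| < d` for every nonzero
`u ∈ ℤⁿ`. -/
def ZSparse (d : ℕ) (S : Set (Fin n → ℤ)) : Prop :=
  ∀ u : Fin n → ℤ, u ≠ 0 → (S ∩ ztranslate u S).encard < d

/-!
For hyperplanes `H₁, H₂ ⊆ E` we have `H₁ ∩ (u + H₂) ⊆ E ∩ (u + E)`, so sparseness forces
`u = 0`. In a paving matroid of rank `d + 1` every `d`-set is independent, and an independent
`d`-set inside a hyperplane spans it; hence two hyperplanes sharing `d` points are both the closure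
of those points.
-/

namespace Matroid

variable {α : Type*} {M : Matroid α} {C H X : Set α}

lemma eRank'_eq_eRank (M : Matroid α) : M.eRank' = M.eRank := by
  obtain ⟨B, hB⟩ := M.exists_isBase
  refine le_antisymm (iSup₂_le fun B' hB' => (IsBase.encard_eq_eRank hB').le) ?_
  rw [← hB.encard_eq_eRank]
  exact le_iSup₂ (f := fun (B : Set α) (_ : B ∈ {B | M.IsBase B}) => B.encard) B hB

lemma isHyperplane_iff : M.IsHyperplane H ↔ H ⊆ M.E ∧ M.eRk H + 1 = M.eRank ∧
    ∀ H', H ⊂ H' → H' ⊆ M.E → M.eRk H' + 1 ≠ M.eRank := by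
  simp only [IsHyperplane, eRank'_eq_eRank, eRank_restrict]

lemma IsHyperplane.subset_ground (hH : M.IsHyperplane H) : H ⊆ M.E :=
  (isHyperplane_iff.mp hH).1

lemma IsHyperplane.eRk_add_one (hH : M.IsHyperplane H) : M.eRk H + 1 = M.eRank :=
  (isHyperplane_iff.mp hH).2.1

lemma IsHyperplane.eRk_eq {k : ℕ} (hH : M.IsHyperplane H) (hM : M.eRank = k + 1) :
    M.eRk H = k :=
  WithTop.add_right_cancel ENat.one_ne_top (hH.eRk_add_one.trans hM)

lemma not_isHyperplane_ground (hM : M.eRank ≠ ⊤) : ¬ M.IsHyperplane M.E := by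
  intro hH
  have h := hH.eRk_add_one
  rw [eRk_ground] at h
  exact ((ENat.lt_add_one_iff hM).mpr le_rfl).ne' h

lemma IsHyperplane.closure_eq (hH : M.IsHyperplane H) : M.closure H = H := by
  by_contra hne
  have hsub : H ⊂ M.closure H := (M.subset_closure H hH.subset_ground).ssubset_of_ne (Ne.symm hne)
  exact (isHyperplane_iff.mp hH).2.2 _ hsub (M.closure_subset_ground H)
    (by rw [eRk_closure_eq, hH.eRk_add_one])

lemma IsHyperplane.closure_eq_of_indep (hH : M.IsHyperplane H) (hX : M.Indep X) (hXfin : X.Finite)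
    (hXH : X ⊆ H) (hHX : M.eRk H ≤ X.encard) : M.closure X = H := by
  have hXbasis : M.IsBasis X H :=
    hX.isBasis_of_eRk_ge hXfin hXH (hX.eRk_eq_encard ▸ hHX) hH.subset_ground
  rw [hXbasis.closure_eq_closure, hH.closure_eq]

lemma IsCircuit.isCircuit' (hC : M.IsCircuit C) : M.IsCircuit' C :=
  ⟨hC.dep, fun _ hD hDC => hDC.antisymm (hC.2 hD hDC)⟩

lemma indep_of_encard_le {k : ℕ∞} (hk : ∀ C, M.IsCircuit' C → k < C.encard)
    (hXE : X ⊆ M.E) (hX : X.encard ≤ k) : M.Indep X := by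
  by_contra hdep
  obtain ⟨C, hCX, hC⟩ := ((not_indep_iff hXE).mp hdep).exists_isCircuit_subset
  exact (hk C hC.isCircuit').not_ge ((encard_mono hCX).trans hX)

end Matroid

@[simp]
lemma ztranslate_zero (S : Set (Fin n → ℤ)) : ztranslate 0 S = S := by
  simp [ztranslate]

lemma ZSparse.eq_zero_of_le_encard_inter {d : ℕ} {E S T : Set (Fin n → ℤ)} {u : Fin n → ℤ}
    (hE : ZSparse d E) (hS : S ⊆ E) (hT : T ⊆ E)
    (h : (d : ℕ∞) ≤ (S ∩ ztranslate u T).encard) : u = 0 := by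
  by_contra hu
  exact (h.trans (encard_mono (inter_subset_inter hS (image_mono hT)))).not_gt (hE u hu)

/-- If `E ⊆ ℤⁿ` is `d`-sparse and `M` is a rank-`(d+1)` paving matroid on `E`,
then: `ℤⁿ` is not a hyperplane of `M`; every hyperplane of `M` has at least
`d` elements; and if two hyperplanes satisfy `|H₁ ∩ (u + H₂)| ≥ d`, then
`u = 0` and `H₁ = H₂`. -/
theorem hyperplanes_of_paving_on_sparse_set (d : ℕ) (E : Set (Fin n → ℤ))
    (hE : ZSparse d E) (M : Matroid (Fin n → ℤ)) (hME : M.E = E)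
    (hrank : M.eRank' = d + 1)
    (hpaving : ∀ C, M.IsCircuit' C → C.encard = d + 1 ∨ C.encard = d + 2) :
    (univ : Set (Fin n → ℤ)) ∉ {H | M.IsHyperplane H} ∧
    (∀ H, M.IsHyperplane H → (d : ℕ∞) ≤ H.encard) ∧
    (∀ H₁ H₂, M.IsHyperplane H₁ → M.IsHyperplane H₂ → ∀ u : Fin n → ℤ,
      (d : ℕ∞) ≤ (H₁ ∩ ztranslate u H₂).encard → u = 0 ∧ H₁ = H₂) := by
  rw [eRank'_eq_eRank] at hrank
  have hindep : ∀ X ⊆ M.E, X.encard ≤ d → M.Indep X := fun X hXE hX =>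
    indep_of_encard_le (fun C hC => by
      rcases hpaving C hC with h | h <;> rw [h] <;> norm_cast <;> omega) hXE hX
  refine ⟨fun hH => ?_, fun H hH => ?_, fun H₁ H₂ hH₁ hH₂ u hcard => ?_⟩
  · replace hH : M.IsHyperplane univ := hH
    rw [← univ_subset_iff.mp hH.subset_ground] at hH
    exact not_isHyperplane_ground (by simp [hrank]) hH
  · exact hH.eRk_eq hrank ▸ M.eRk_le_encard H
  · obtain rfl := hE.eq_zero_of_le_encard_inter (hME ▸ hH₁.subset_ground)
      (hME ▸ hH₂.subset_ground) hcard
    rw [ztranslate_zero] at hcard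
    obtain ⟨X, hXH, hXd⟩ := exists_subset_encard_eq hcard
    have hX := hindep X (hXH.trans (inter_subset_left.trans hH₁.subset_ground)) hXd.le
    have hspan : ∀ H, M.IsHyperplane H → X ⊆ H → M.closure X = H := fun H hH hXH =>
      hH.closure_eq_of_indep hX (finite_of_encard_eq_coe hXd) hXH (by rw [hH.eRk_eq hrank, hXd])
    exact ⟨rfl, (hspan H₁ hH₁ (hXH.trans inter_subset_left)).symm.trans
      (hspan H₂ hH₂ (hXH.trans inter_subset_right))⟩
end
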